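/- Let Z be a real random variable. If there exists an irrational u ∈ ℝ such that {Z} and {Z + u} have the same law, then the law of {Z} is the uniform distribution on [0,1). -/

import Mathlib

/-!
Reduce mod 1: the law `ν` of `Z` on the circle `ℝ/ℤ` is invariant under rotation by `u`. Rotation
by `u` multiplies the `n`-th Fourier coefficient of `ν` by `e^{2πinu} ≠ 1` (`u` is irrational), so
all coefficients with `n ≠ 0` vanish and `ν` is Haar measure, since finite measures on the circle
are determined by their Fourier coefficients. Lifting back through the fundamental domain
`[0,1)` turns Haar measure into Lebesgue measure on `[0,1)`.
-/

open MeasureTheory Set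

namespace AddCircle

variable {T : ℝ}

theorem integral_fourier_eq_zero_of_map_add_eq {μ : Measure (AddCircle T)} {t : AddCircle T}
    (h : μ.map (· + t) = μ) {n : ℤ} (hn : fourier n t ≠ 1) : ∫ x, fourier n x ∂μ = 0 := by
  have hrot : ∫ x, fourier n x ∂μ = (∫ x, fourier n x ∂μ) * fourier n t := by
    conv_lhs => rw [← h]
    rw [integral_map (measurable_add_const t).aemeasurable
      (map_continuous (fourier n)).aestronglyMeasurable]
    simp only [fourier_apply, smul_add, toCircle_add, Circle.coe_mul, integral_mul_const]
  by_contra hne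
  exact hn (mul_left_cancel₀ hne (hrot.symm.trans (mul_one _).symm))

variable [Fact (0 < T)]

open BoundedContinuousFunction in
theorem measure_ext_of_integral_fourier_eq {μ ν : Measure (AddCircle T)} [IsFiniteMeasure μ]
    [IsFiniteMeasure ν] (h : ∀ n : ℤ, ∫ x, fourier n x ∂μ = ∫ x, fourier n x ∂ν) : μ = ν := by
  have hint (m : Measure (AddCircle T)) [IsFiniteMeasure m] (f : C(AddCircle T, ℂ)) :
      Integrable f m :=
    (mkOfCompact f).integrable m
  have hspan : ∀ f ∈ Submodule.span ℂ (range (fourier (T := T))),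
      ∫ x, f x ∂μ = ∫ x, f x ∂ν := by
    intro f hf
    induction hf using Submodule.span_induction with
    | mem f hf => obtain ⟨n, rfl⟩ := hf; exact h n
    | zero => simp
    | add f g _ _ hf hg =>
      simp only [ContinuousMap.coe_add, Pi.add_apply]
      rw [integral_add (hint μ f) (hint μ g), integral_add (hint ν f) (hint ν g), hf, hg]
    | smul c f _ hf =>
      simp only [ContinuousMap.coe_smul, Pi.smul_apply, smul_eq_mul, integral_const_mul, hf]
  refine ext_of_forall_mem_subalgebra_integral_eq_of_polish
    (A := fourierSubalgebra.comap (toContinuousMapStarₐ ℂ)) ?_ fun g hg => ?_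
  · intro x y hxy
    obtain ⟨_, ⟨f, hf, rfl⟩, hfxy⟩ := fourierSubalgebra_separatesPoints hxy
    exact ⟨_, ⟨_, ⟨mkOfCompact f, hf, rfl⟩, rfl⟩, hfxy⟩
  · exact hspan (toContinuousMapStarₐ ℂ g) (by rw [← fourierSubalgebra_coe]; exact hg)

theorem fourier_ne_one_of_not_isOfFinAddOrder {t : AddCircle T} (ht : ¬IsOfFinAddOrder t)
    {n : ℤ} (hn : n ≠ 0) : fourier n t ≠ 1 := by
  intro h
  refine ht (isOfFinAddOrder_iff_zsmul_eq_zero.2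
    ⟨n, hn, injective_toCircle (Fact.out : 0 < T).ne' ?_⟩)
  rw [toCircle_zero]
  exact Circle.coe_injective h

theorem eq_haarAddCircle_of_map_add_eq {μ : Measure (AddCircle T)} [IsProbabilityMeasure μ]
    {t : AddCircle T} (ht : ¬IsOfFinAddOrder t) (h : μ.map (· + t) = μ) :
    μ = haarAddCircle := by
  refine measure_ext_of_integral_fourier_eq fun n => ?_
  rcases eq_or_ne n 0 with rfl | hn
  · simp
  · have hnt := fourier_ne_one_of_not_isOfFinAddOrder ht hn
    rw [integral_fourier_eq_zero_of_map_add_eq h hnt,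
      integral_fourier_eq_zero_of_map_add_eq (map_add_right_eq_self _ t) hnt]

theorem not_isOfFinAddOrder_coe {u : ℝ} (hu : Irrational (u / T)) :
    ¬IsOfFinAddOrder (u : AddCircle T) :=
  not_isOfFinAddOrder_iff_forall_rat_ne_div.2 fun q => (hu.ne_rat q).symm

end AddCircle

namespace UnitAddCircle

noncomputable def toIco (y : UnitAddCircle) : ℝ := AddCircle.equivIco 1 0 y

@[simp]
theorem toIco_coe (x : ℝ) : toIco x = Int.fract x := by
  simp [toIco]

theorem measurable_toIco : Measurable toIco :=
  measurable_subtype_coe.comp (AddCircle.measurableEquivIco 1 0).measurable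

theorem map_coe_map_fract_comp (μ : Measure ℝ) {f : ℝ → ℝ} (hf : Measurable f) :
    (μ.map fun x => Int.fract (f x)).map ((↑) : ℝ → UnitAddCircle) =
      μ.map fun x => (f x : UnitAddCircle) := by
  rw [Measure.map_map (f := fun x => Int.fract (f x)) AddCircle.measurable_mk'
    (measurable_fract.comp hf)]
  simp only [Function.comp_def, AddCircle.coe_fract]

theorem map_fract_eq_map_toIco_map_coe (μ : Measure ℝ) :
    μ.map Int.fract = (μ.map ((↑) : ℝ → UnitAddCircle)).map toIco := by
  rw [Measure.map_map measurable_toIco AddCircle.measurable_mk']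
  simp only [Function.comp_def, toIco_coe]

theorem map_toIco_volume :
    (volume : Measure UnitAddCircle).map toIco = volume.restrict (Ico 0 1) := by
  have hIco : (volume.restrict (Ico (0 : ℝ) 1)).map ((↑) : ℝ → UnitAddCircle) = volume := by
    rw [← (UnitAddCircle.measurePreserving_mk 0).map_eq, zero_add]
    exact congrArg _ (Measure.restrict_congr_set (Ico_ae_eq_Ioc' (by simp) (by simp)))
  rw [← hIco, ← map_fract_eq_map_toIco_map_coe]
  conv_rhs => rw [← Measure.map_id (μ := volume.restrict (Ico (0 : ℝ) 1))]
  refine Measure.map_congr ?_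
  filter_upwards [ae_restrict_mem measurableSet_Ico] with x hx
  exact Int.fract_eq_self.2 hx

end UnitAddCircle

theorem map_fract_eq_volume_restrict_of_irrational {μ : Measure ℝ} [IsProbabilityMeasure μ]
    {u : ℝ} (hu : Irrational u) (h : μ.map Int.fract = μ.map fun x => Int.fract (x + u)) :
    μ.map Int.fract = volume.restrict (Ico 0 1) := by
  set ν := μ.map ((↑) : ℝ → UnitAddCircle)
  have : IsProbabilityMeasure ν :=
    Measure.isProbabilityMeasure_map AddCircle.measurable_mk'.aemeasurable
  have hinv : ν.map (· + (u : UnitAddCircle)) = ν := by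
    calc ν.map (· + (u : UnitAddCircle))
        = μ.map fun x => ((x + u : ℝ) : UnitAddCircle) := by
          rw [Measure.map_map (measurable_add_const _) AddCircle.measurable_mk']
          simp only [Function.comp_def, AddCircle.coe_add]
      _ = (μ.map fun x => Int.fract (x + u)).map ((↑) : ℝ → UnitAddCircle) :=
          (UnitAddCircle.map_coe_map_fract_comp μ (measurable_add_const u)).symm
      _ = ν := by
          rw [← h]; exact UnitAddCircle.map_coe_map_fract_comp μ measurable_id
  have hvol : ν = volume := by
    rw [AddCircle.eq_haarAddCircle_of_map_add_eq
      (AddCircle.not_isOfFinAddOrder_coe (by rwa [div_one])) hinv,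
      AddCircle.volume_eq_smul_haarAddCircle, ENNReal.ofReal_one, one_smul]
  calc μ.map Int.fract = ν.map UnitAddCircle.toIco :=
        UnitAddCircle.map_fract_eq_map_toIco_map_coe μ
    _ = volume.restrict (Ico 0 1) := by rw [hvol, UnitAddCircle.map_toIco_volume]

/-- If there exists an irrational `u` such that `{Z}` and `{Z + u}`
have the same law, then the law of `{Z}` is the uniform distribution on `[0,1)`. -/
theorem fract_law_uniform_of_irrational_shift
    {Ω : Type*} [MeasurableSpace Ω] (P : Measure Ω) [IsProbabilityMeasure P]
    (Z : Ω → ℝ) (hZ : Measurable Z)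
    (h : ∃ u : ℝ, Irrational u ∧
        P.map (fun ω => Int.fract (Z ω)) = P.map (fun ω => Int.fract (Z ω + u))) :
    P.map (fun ω => Int.fract (Z ω)) = volume.restrict (Set.Ico (0 : ℝ) 1) := by
  obtain ⟨u, hu, hlaw⟩ := h
  have : IsProbabilityMeasure (P.map Z) := Measure.isProbabilityMeasure_map hZ.aemeasurable
  have hmap (f : ℝ → ℝ) (hf : Measurable f) : P.map (fun ω => f (Z ω)) = (P.map Z).map f :=
    (Measure.map_map hf hZ).symm
  rw [hmap _ measurable_fract] at hlaw ⊢
  rw [hmap (fun x => Int.fract (x + u)) (measurable_fract.comp (measurable_add_const u))] at hlaw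
  exact map_fract_eq_volume_restrict_of_irrational hu hlaw
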